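/- arXiv:2406.08722 — 3 statements merged into one kernel-verified Lean document; each statement's English description precedes it below -/
import Mathlib

section
/- Let p > 2 be a real number. Then for all real numbers u₁, u₂, one has (|u₁|^{p−2}u₁ − |u₂|^{p−2}u₂)(u₁ − u₂) ≥ 2^{1−p} |u₁ − u₂|^p. -/
/-!
Write `φ(u) = |u|^(q-1) u` with `q = p - 1 ≥ 1`; it suffices to show
`φ(a) - φ(b) ≥ 2^(1-q) (a - b)^q` for `b ≤ a` and multiply by `a - b`.
By oddness of `φ` we may assume `b ≥ 0` or `b ≤ 0 ≤ a`. In the first case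
superadditivity of `x ↦ x^q` gives `a^q - b^q ≥ (a - b)^q`; in the second,
`φ(a) - φ(b) = a^q + (-b)^q ≥ 2^(1-q) (a + (-b))^q` by convexity of `x ↦ x^q`.
This even gives the constant `2^(2-p)`, larger than the required `2^(1-p)`.
-/

open Real

namespace Real

theorem rpow_add_le_mul_rpow_add_rpow {q x y : ℝ} (hx : 0 ≤ x) (hy : 0 ≤ y) (hq : 1 ≤ q) :
    (x + y) ^ q ≤ 2 ^ (q - 1) * (x ^ q + y ^ q) := by
  lift x to NNReal using hx
  lift y to NNReal using hy
  exact_mod_cast NNReal.rpow_add_le_mul_rpow_add_rpow x y hq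

end Real

noncomputable def signedRpow (q u : ℝ) : ℝ := |u| ^ (q - 1) * u

theorem signedRpow_neg (q u : ℝ) : signedRpow q (-u) = -signedRpow q u := by
  simp only [signedRpow, abs_neg, mul_neg]

theorem signedRpow_of_nonneg {q u : ℝ} (hq : q ≠ 0) (hu : 0 ≤ u) : signedRpow q u = u ^ q := by
  rcases hu.eq_or_lt with rfl | hu
  · simp [signedRpow, zero_rpow hq]
  · rw [signedRpow, abs_of_pos hu, ← rpow_add_one hu.ne', sub_add_cancel]

theorem sub_rpow_le_signedRpow_sub_of_nonneg {q a b : ℝ} (hq : 1 ≤ q) (hb : 0 ≤ b)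
    (hba : b ≤ a) : (a - b) ^ q ≤ signedRpow q a - signedRpow q b := by
  have hq0 : q ≠ 0 := by positivity
  rw [signedRpow_of_nonneg hq0 (hb.trans hba), signedRpow_of_nonneg hq0 hb, le_sub_iff_add_le',
    ← add_sub_cancel b a]
  simpa using add_rpow_le_rpow_add hb (sub_nonneg.2 hba) hq

theorem two_rpow_mul_sub_rpow_le_signedRpow_sub_of_nonpos_of_nonneg {q a b : ℝ} (hq : 1 ≤ q)
    (hb : b ≤ 0) (ha : 0 ≤ a) :
    2 ^ (1 - q) * (a - b) ^ q ≤ signedRpow q a - signedRpow q b := by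
  have hq0 : q ≠ 0 := by positivity
  have hφb : signedRpow q b = -(-b) ^ q := by
    rw [← neg_neg b, signedRpow_neg, neg_neg, signedRpow_of_nonneg hq0 (neg_nonneg.2 hb)]
  have h2 : (2 : ℝ) ^ (1 - q) * 2 ^ (q - 1) = 1 := by
    rw [← rpow_add two_pos, sub_add_sub_cancel', sub_self, rpow_zero]
  calc 2 ^ (1 - q) * (a - b) ^ q
      ≤ 2 ^ (1 - q) * (2 ^ (q - 1) * (a ^ q + (-b) ^ q)) := by
        gcongr
        simpa [sub_eq_add_neg] using rpow_add_le_mul_rpow_add_rpow ha (neg_nonneg.2 hb) hq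
    _ = signedRpow q a - signedRpow q b := by
        rw [← mul_assoc, h2, one_mul, signedRpow_of_nonneg hq0 ha, hφb, sub_neg_eq_add]

theorem two_rpow_mul_sub_rpow_le_signedRpow_sub {q a b : ℝ} (hq : 1 ≤ q) (hba : b ≤ a) :
    2 ^ (1 - q) * (a - b) ^ q ≤ signedRpow q a - signedRpow q b := by
  have h2 : (2 : ℝ) ^ (1 - q) ≤ 1 := rpow_le_one_of_one_le_of_nonpos one_le_two (by linarith)
  have hab : 0 ≤ (a - b) ^ q := rpow_nonneg (sub_nonneg.2 hba) q
  rcases le_total 0 b with hb | hb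
  · nlinarith [sub_rpow_le_signedRpow_sub_of_nonneg hq hb hba]
  rcases le_total a 0 with ha | ha
  · have h := sub_rpow_le_signedRpow_sub_of_nonneg hq (neg_nonneg.2 ha) (neg_le_neg hba)
    rw [signedRpow_neg, signedRpow_neg, neg_sub_neg] at h
    nlinarith
  · exact two_rpow_mul_sub_rpow_le_signedRpow_sub_of_nonpos_of_nonneg hq hb ha

theorem two_rpow_mul_abs_sub_rpow_le_signedRpow_sub_mul {q : ℝ} (hq : 1 ≤ q) (a b : ℝ) :
    2 ^ (1 - q) * |a - b| ^ (q + 1) ≤ (signedRpow q a - signedRpow q b) * (a - b) := by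
  wlog hba : b ≤ a generalizing a b
  · rw [abs_sub_comm, ← neg_mul_neg (signedRpow q a - _), neg_sub, neg_sub]
    exact this b a (le_of_not_ge hba)
  have hab : 0 ≤ a - b := sub_nonneg.2 hba
  rw [abs_of_nonneg hab, rpow_add_one' hab (by positivity), ← mul_assoc]
  exact mul_le_mul_of_nonneg_right (two_rpow_mul_sub_rpow_le_signedRpow_sub hq hba) hab

/-- Elementary inequality: for a real exponent `p > 2` and all real `u₁, u₂`,
`(|u₁|^(p-2) u₁ - |u₂|^(p-2) u₂)(u₁ - u₂) ≥ 2^(1-p) |u₁ - u₂|^p`,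
where powers are real (rpow) powers. -/
theorem monotone_power_nonlinearity_lower_bound
    (p : ℝ) (hp : 2 < p) (u₁ u₂ : ℝ) :
    (2 : ℝ) ^ (1 - p) * |u₁ - u₂| ^ p ≤
      (|u₁| ^ (p - 2) * u₁ - |u₂| ^ (p - 2) * u₂) * (u₁ - u₂) := by
  have hφ (u : ℝ) : |u| ^ (p - 2) * u = signedRpow (p - 1) u := by
    rw [signedRpow, sub_sub, one_add_one_eq_two]
  have hconst : (2 : ℝ) ^ (1 - p) ≤ 2 ^ (1 - (p - 1)) :=
    rpow_le_rpow_of_exponent_le one_le_two (by linarith)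
  have h := two_rpow_mul_abs_sub_rpow_le_signedRpow_sub_mul (by linarith : 1 ≤ p - 1) u₁ u₂
  rw [sub_add_cancel] at h
  rw [hφ, hφ]
  exact (mul_le_mul_of_nonneg_right hconst (by positivity)).trans h
end

section
/- For every ε > 0 there exists a constant C > 0, depending only on ε, p, q, ‖κ‖_{L^∞} and ∑_k α_k (but not on u₁, u₂), such that for all u₁, u₂ ∈ L²(ℝⁿ) ∩ L^p(ℝⁿ): ∑_{k∈ℕ} ∫_{ℝⁿ} κ(x)² ( σ_{2,k}(x, u₁(x)) − σ_{2,k}(x, u₂(x)) )² dx ≤ C ‖u₁ − u₂‖²_{L²} + ε ∫_{ℝⁿ} ( |u₁(x)|^{p−2} + |u₂(x)|^{p−2} ) (u₁(x) − u₂(x))² dx. -/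
open MeasureTheory

open scoped ENNReal NNReal

private lemma aux_interp (s t δ : ℝ) (hs : 0 ≤ s) (hst : s < t) (hδ : 0 < δ) :
    ∃ K : ℝ, 1 ≤ K ∧ ∀ a : ℝ, |a| ^ s ≤ K + δ * |a| ^ t := by
  set R : ℝ := max (δ⁻¹ ^ (t - s)⁻¹) 1 with hR
  have hR1 : 1 ≤ R := le_max_right _ _
  have hR0 : 0 ≤ R := le_trans zero_le_one hR1
  refine ⟨R ^ s, Real.one_le_rpow hR1 hs, fun a => ?_⟩
  have hx0 : 0 ≤ |a| := abs_nonneg a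
  rcases le_or_gt |a| R with hle | hgt
  · have h1 : |a| ^ s ≤ R ^ s := Real.rpow_le_rpow hx0 hle hs
    have h2 : 0 ≤ δ * |a| ^ t := mul_nonneg hδ.le (Real.rpow_nonneg hx0 t)
    linarith
  · have hx1 : 1 < |a| := lt_of_le_of_lt hR1 hgt
    have hx0' : (0:ℝ) < |a| := lt_trans zero_lt_one hx1
    have hts : 0 < t - s := sub_pos.mpr hst
    have h1 : δ⁻¹ ≤ |a| ^ (t - s) := by
      have h2 : δ⁻¹ ^ (t - s)⁻¹ ≤ |a| := le_trans (le_max_left _ _) hgt.le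
      have h3 : (δ⁻¹ ^ (t - s)⁻¹) ^ (t - s) ≤ |a| ^ (t - s) :=
        Real.rpow_le_rpow (Real.rpow_nonneg (by positivity) _) h2 hts.le
      rwa [← Real.rpow_mul (by positivity), inv_mul_cancel₀ hts.ne', Real.rpow_one] at h3
    have h4 : |a| ^ s ≤ δ * |a| ^ t := by
      have h5 : |a| ^ t = |a| ^ (t - s) * |a| ^ s := by
        rw [← Real.rpow_add hx0']; ring_nf
      have h6 : δ⁻¹ * |a| ^ s ≤ |a| ^ (t - s) * |a| ^ s :=
        mul_le_mul_of_nonneg_right h1 (Real.rpow_nonneg hx0 s)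
      calc |a| ^ s = δ * (δ⁻¹ * |a| ^ s) := by field_simp
        _ ≤ δ * (|a| ^ (t - s) * |a| ^ s) := mul_le_mul_of_nonneg_left h6 hδ.le
        _ = δ * |a| ^ t := by rw [h5]
    have h7 : (0:ℝ) < R ^ s := Real.rpow_pos_of_pos (lt_of_lt_of_le zero_lt_one hR1) s
    linarith

private lemma aux_young (p : ℝ) (hp : 2 ≤ p) (a b : ℝ) :
    |a| ^ (p - 2) * b ^ 2 ≤ |a| ^ p + |b| ^ p := by
  have hb2 : b ^ 2 = |b| ^ ((2:ℕ):ℝ) := by rw [Real.rpow_natCast, sq_abs]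
  have h2 : (0:ℝ) ≤ p - 2 := by linarith
  have hpne : p - 2 + (2:ℝ) ≠ 0 := by push_cast; linarith
  have key : ∀ c d : ℝ, 0 ≤ c → 0 ≤ d → c ^ (p - 2) * d ^ ((2:ℕ):ℝ) ≤ c ^ p + d ^ p := by
    intro c d hc hd
    rcases le_total c d with h | h
    · calc c ^ (p - 2) * d ^ ((2:ℕ):ℝ)
          ≤ d ^ (p - 2) * d ^ ((2:ℕ):ℝ) :=
            mul_le_mul_of_nonneg_right (Real.rpow_le_rpow hc h h2) (Real.rpow_nonneg hd _)
        _ = d ^ (p - 2 + ((2:ℕ):ℝ)) := (Real.rpow_add' hd (by push_cast; linarith)).symm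
        _ = d ^ p := by norm_num
        _ ≤ c ^ p + d ^ p := le_add_of_nonneg_left (Real.rpow_nonneg hc p)
    · calc c ^ (p - 2) * d ^ ((2:ℕ):ℝ)
          ≤ c ^ (p - 2) * c ^ ((2:ℕ):ℝ) :=
            mul_le_mul_of_nonneg_left (Real.rpow_le_rpow hd h (by norm_num)) (Real.rpow_nonneg hc _)
        _ = c ^ (p - 2 + ((2:ℕ):ℝ)) := (Real.rpow_add' hc (by push_cast; linarith)).symm
        _ = c ^ p := by norm_num
        _ ≤ c ^ p + d ^ p := le_add_of_nonneg_right (Real.rpow_nonneg hd p)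
  rw [hb2]
  exact key |a| |b| (abs_nonneg a) (abs_nonneg b)

set_option maxHeartbeats 1600000 in
/-- Lipschitz estimate for the superlinear diffusion coefficients: for every `ε > 0`
there is `C > 0` (independent of `u₁, u₂`) such that for all `u₁, u₂ ∈ L² ∩ L^p`,
`∑_k ∫ κ² (σ₂ₖ(·,u₁) - σ₂ₖ(·,u₂))² ≤ C ‖u₁-u₂‖₂² + ε ∫ (|u₁|^{p-2}+|u₂|^{p-2})(u₁-u₂)²`. -/
theorem diffusion_lipschitz_estimate
    (n : ℕ) (hn : 1 ≤ n) (p q : ℝ) (hp : 2 < p) (hq : 2 ≤ q) (hq' : q ≤ 1 + p / 2)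
    (κ : EuclideanSpace ℝ (Fin n) → ℝ)
    (hκ2 : MemLp κ 2 volume) (hκtop : MemLp κ ⊤ volume)
    (σ₂ : ℕ → EuclideanSpace ℝ (Fin n) → ℝ → ℝ)
    (hσ₂ : ∀ k, Measurable (Function.uncurry (σ₂ k)))
    (α : ℕ → ℝ) (hα0 : ∀ k, 0 ≤ α k) (hα : Summable α)
    (hlip : ∀ k x v₁ v₂, (σ₂ k x v₁ - σ₂ k x v₂) ^ 2 ≤
      α k * (1 + |v₁| ^ (q - 2) + |v₂| ^ (q - 2)) * (v₁ - v₂) ^ 2)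
    (ε : ℝ) (hε : 0 < ε) :
    ∃ C > 0, ∀ u₁ u₂ : EuclideanSpace ℝ (Fin n) → ℝ,
      MemLp u₁ 2 volume → MemLp u₁ (ENNReal.ofReal p) volume →
      MemLp u₂ 2 volume → MemLp u₂ (ENNReal.ofReal p) volume →
      ∑' k, ∫ x, (κ x) ^ 2 * (σ₂ k x (u₁ x) - σ₂ k x (u₂ x)) ^ 2 ≤
        C * (eLpNorm (fun x => u₁ x - u₂ x) 2 volume).toReal ^ 2 +
          ε * ∫ x, (|u₁ x| ^ (p - 2) + |u₂ x| ^ (p - 2)) * (u₁ x - u₂ x) ^ 2 := by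
  have hM0 : 0 ≤ (eLpNorm κ ⊤ volume).toReal := ENNReal.toReal_nonneg
  set M : ℝ := (eLpNorm κ ⊤ volume).toReal with hMdef
  have hMae : ∀ᵐ x ∂(volume : Measure (EuclideanSpace ℝ (Fin n))), |κ x| ≤ M := by
    filter_upwards [ae_le_eLpNormEssSup (f := κ) (μ := (volume : Measure (EuclideanSpace ℝ (Fin n))))] with x hx
    have h1 : ((‖κ x‖₊ : ℝ≥0∞)).toReal ≤ (eLpNormEssSup κ volume).toReal := by
      apply ENNReal.toReal_mono ?_ hx
      rw [← eLpNorm_exponent_top]; exact hκtop.2.ne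
    rw [hMdef]
    simpa [Real.norm_eq_abs] using h1
  set A : ℝ := ∑' k, α k with hAdef
  have hA0 : 0 ≤ A := tsum_nonneg hα0
  have hD0 : 0 < (M ^ 2 + 1) * (A + 1) := by positivity
  set δ : ℝ := ε / ((M ^ 2 + 1) * (A + 1)) with hδdef
  have hδ0 : 0 < δ := div_pos hε hD0
  have hδε : A * M ^ 2 * δ ≤ ε := by
    have h1 : A * M ^ 2 ≤ (M ^ 2 + 1) * (A + 1) := by nlinarith [sq_nonneg M]
    calc A * M ^ 2 * δ ≤ (M ^ 2 + 1) * (A + 1) * δ :=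
          mul_le_mul_of_nonneg_right h1 hδ0.le
      _ = ε := by rw [hδdef]; field_simp
  have hs0 : (0:ℝ) ≤ q - 2 := by linarith
  have hst : q - 2 < p - 2 := by linarith
  obtain ⟨K, hK1, hK⟩ := aux_interp (q - 2) (p - 2) δ hs0 hst hδ0
  have hC0 : 0 ≤ A * M ^ 2 * (1 + 2 * K) :=
    mul_nonneg (mul_nonneg hA0 (sq_nonneg M)) (by linarith)
  refine ⟨A * M ^ 2 * (1 + 2 * K) + 1, by linarith, ?_⟩
  intro u₁ u₂ hu₁2 hu₁p hu₂2 hu₂p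
  have hv2 : MemLp (fun x => u₁ x - u₂ x) 2 volume := hu₁2.sub hu₂2
  have hu₁m : AEMeasurable u₁ volume := hu₁2.aestronglyMeasurable.aemeasurable
  have hu₂m : AEMeasurable u₂ volume := hu₂2.aestronglyMeasurable.aemeasurable
  have hvm : AEMeasurable (fun x => u₁ x - u₂ x) volume := hu₁m.sub hu₂m
  have hκm : AEMeasurable κ volume := hκ2.aestronglyMeasurable.aemeasurable
  have hp0 : (0:ℝ) < p := by linarith
  -- integrability of |u i|^p
  have hP : ∀ u : EuclideanSpace ℝ (Fin n) → ℝ, MemLp u (ENNReal.ofReal p) volume →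
      Integrable (fun x => |u x| ^ p) volume := by
    intro u hu
    have h := hu.integrable_norm_rpow (by simp [ENNReal.ofReal_eq_zero]; linarith)
      ENNReal.ofReal_ne_top
    rw [ENNReal.toReal_ofReal hp0.le] at h
    simpa [Real.norm_eq_abs] using h
  have hP1 := hP u₁ hu₁p
  have hP2 := hP u₂ hu₂p
  have hrm : ∀ u : EuclideanSpace ℝ (Fin n) → ℝ, AEMeasurable u volume →
      AEMeasurable (fun x => |u x| ^ (p - 2)) volume := fun u hu =>
    ((Real.continuous_rpow_const (by linarith)).comp continuous_abs).measurable.comp_aemeasurable hu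
  -- integrability of |u|^{p-2} (u₁-u₂)²
  have hIpv : ∀ u : EuclideanSpace ℝ (Fin n) → ℝ, AEMeasurable u volume →
      Integrable (fun x => |u x| ^ p) volume →
      Integrable (fun x => |u x| ^ (p - 2) * (u₁ x - u₂ x) ^ 2) volume := by
    intro u hum hIP
    apply Integrable.mono'
      (g := fun x => 2 * (|u x| ^ p + |u₁ x| ^ p) + 2 * (|u x| ^ p + |u₂ x| ^ p))
      (((hIP.add hP1).const_mul 2).add ((hIP.add hP2).const_mul 2))
      (((hrm u hum).mul (hvm.pow_const 2)).aestronglyMeasurable)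
    refine Filter.Eventually.of_forall fun x => ?_
    have h0 : 0 ≤ |u x| ^ (p - 2) := Real.rpow_nonneg (abs_nonneg _) _
    have hnn : 0 ≤ |u x| ^ (p - 2) * (u₁ x - u₂ x) ^ 2 := mul_nonneg h0 (sq_nonneg _)
    rw [Real.norm_eq_abs]; simp only [Pi.mul_apply]; rw [abs_of_nonneg hnn]
    have h1 : (u₁ x - u₂ x) ^ 2 ≤ 2 * u₁ x ^ 2 + 2 * u₂ x ^ 2 := by
      nlinarith [sq_nonneg (u₁ x + u₂ x)]
    have h2 : |u x| ^ (p - 2) * (u₁ x - u₂ x) ^ 2 ≤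
        |u x| ^ (p - 2) * (2 * u₁ x ^ 2 + 2 * u₂ x ^ 2) :=
      mul_le_mul_of_nonneg_left h1 h0
    have h3 := aux_young p hp.le (u x) (u₁ x)
    have h4 := aux_young p hp.le (u x) (u₂ x)
    nlinarith [h2, h3, h4]
  have hIv1 := hIpv u₁ hu₁m hP1
  have hIv2 := hIpv u₂ hu₂m hP2
  have hIS : Integrable
      (fun x => (|u₁ x| ^ (p - 2) + |u₂ x| ^ (p - 2)) * (u₁ x - u₂ x) ^ 2) volume :=
    (hIv1.add hIv2).congr (Filter.Eventually.of_forall fun x => by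
      simp only [Pi.add_apply]; ring)
  have hIvsq : Integrable (fun x => (u₁ x - u₂ x) ^ 2) volume := by
    have h := hv2.integrable_norm_rpow (by norm_num) ENNReal.ofNat_ne_top
    apply h.congr
    refine Filter.Eventually.of_forall fun x => ?_
    show ‖u₁ x - u₂ x‖ ^ ((2:ℝ≥0∞)).toReal = (u₁ x - u₂ x) ^ 2
    rw [show ((2:ℝ≥0∞)).toReal = ((2:ℕ):ℝ) by simp, Real.rpow_natCast, Real.norm_eq_abs, sq_abs]
  -- the dominating function
  set G : EuclideanSpace ℝ (Fin n) → ℝ := fun x =>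
    M ^ 2 * ((1 + 2 * K) * (u₁ x - u₂ x) ^ 2 +
      δ * ((|u₁ x| ^ (p - 2) + |u₂ x| ^ (p - 2)) * (u₁ x - u₂ x) ^ 2)) with hGdef
  have hGint : Integrable G volume :=
    ((hIvsq.const_mul _).add (hIS.const_mul _)).const_mul _
  have hS0 : ∀ x, 0 ≤ (|u₁ x| ^ (p - 2) + |u₂ x| ^ (p - 2)) * (u₁ x - u₂ x) ^ 2 := fun x =>
    mul_nonneg (add_nonneg (Real.rpow_nonneg (abs_nonneg _) _)
      (Real.rpow_nonneg (abs_nonneg _) _)) (sq_nonneg _)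
  have hG0 : ∀ x, 0 ≤ G x := by
    intro x
    rw [hGdef]
    have h1 : 0 ≤ (1 + 2 * K) * (u₁ x - u₂ x) ^ 2 := mul_nonneg (by linarith) (sq_nonneg _)
    exact mul_nonneg (sq_nonneg M) (add_nonneg h1 (mul_nonneg hδ0.le (hS0 x)))
  -- pointwise a.e. domination
  have hbd : ∀ᵐ x ∂(volume : Measure (EuclideanSpace ℝ (Fin n))), ∀ k,
      κ x ^ 2 * (σ₂ k x (u₁ x) - σ₂ k x (u₂ x)) ^ 2 ≤ α k * G x := by
    filter_upwards [hMae] with x hx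
    intro k
    have hκ2x : κ x ^ 2 ≤ M ^ 2 := by nlinarith [abs_nonneg (κ x), sq_abs (κ x)]
    have hd0 : 0 ≤ (σ₂ k x (u₁ x) - σ₂ k x (u₂ x)) ^ 2 := sq_nonneg _
    have hl := hlip k x (u₁ x) (u₂ x)
    have hB : 1 + |u₁ x| ^ (q - 2) + |u₂ x| ^ (q - 2) ≤
        (1 + 2 * K) + δ * (|u₁ x| ^ (p - 2) + |u₂ x| ^ (p - 2)) := by
      have h1 := hK (u₁ x); have h2 := hK (u₂ x); linarith
    have e1 : κ x ^ 2 * (σ₂ k x (u₁ x) - σ₂ k x (u₂ x)) ^ 2 ≤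
        M ^ 2 * ((σ₂ k x (u₁ x) - σ₂ k x (u₂ x)) ^ 2) :=
      mul_le_mul_of_nonneg_right hκ2x hd0
    have e2 : (σ₂ k x (u₁ x) - σ₂ k x (u₂ x)) ^ 2 ≤
        α k * ((1 + 2 * K) + δ * (|u₁ x| ^ (p - 2) + |u₂ x| ^ (p - 2))) * (u₁ x - u₂ x) ^ 2 :=
      le_trans hl (mul_le_mul_of_nonneg_right
        (mul_le_mul_of_nonneg_left hB (hα0 k)) (sq_nonneg _))
    have e3 : M ^ 2 * ((σ₂ k x (u₁ x) - σ₂ k x (u₂ x)) ^ 2) ≤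
        M ^ 2 * (α k * ((1 + 2 * K) + δ * (|u₁ x| ^ (p - 2) + |u₂ x| ^ (p - 2))) *
          (u₁ x - u₂ x) ^ 2) :=
      mul_le_mul_of_nonneg_left e2 (sq_nonneg M)
    refine le_trans (le_trans e1 e3) (le_of_eq ?_)
    rw [hGdef]
    ring
  -- per-k integrability
  have hfm : ∀ k, AEStronglyMeasurable
      (fun x => κ x ^ 2 * (σ₂ k x (u₁ x) - σ₂ k x (u₂ x)) ^ 2) volume := by
    intro k
    have h1 : AEMeasurable (fun x => σ₂ k x (u₁ x)) volume :=
      (hσ₂ k).comp_aemeasurable (aemeasurable_id.prodMk hu₁m)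
    have h2 : AEMeasurable (fun x => σ₂ k x (u₂ x)) volume :=
      (hσ₂ k).comp_aemeasurable (aemeasurable_id.prodMk hu₂m)
    exact ((hκm.pow_const 2).mul ((h1.sub h2).pow_const 2)).aestronglyMeasurable
  have hfint : ∀ k, Integrable
      (fun x => κ x ^ 2 * (σ₂ k x (u₁ x) - σ₂ k x (u₂ x)) ^ 2) volume := by
    intro k
    apply Integrable.mono' (hGint.const_mul (α k)) (hfm k)
    filter_upwards [hbd] with x hx
    have h0 : 0 ≤ κ x ^ 2 * (σ₂ k x (u₁ x) - σ₂ k x (u₂ x)) ^ 2 :=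
      mul_nonneg (sq_nonneg _) (sq_nonneg _)
    rw [Real.norm_eq_abs, abs_of_nonneg h0]
    exact hx k
  have hIbound : ∀ k, (∫ x, κ x ^ 2 * (σ₂ k x (u₁ x) - σ₂ k x (u₂ x)) ^ 2) ≤
      α k * ∫ x, G x := by
    intro k
    have h := integral_mono_ae (hfint k) (hGint.const_mul (α k)) (hbd.mono fun x hx => hx k)
    rwa [integral_const_mul] at h
  have hnn : ∀ k, 0 ≤ ∫ x, κ x ^ 2 * (σ₂ k x (u₁ x) - σ₂ k x (u₂ x)) ^ 2 := fun k =>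
    integral_nonneg fun x => mul_nonneg (sq_nonneg _) (sq_nonneg _)
  have hsum : Summable (fun k => ∫ x, κ x ^ 2 * (σ₂ k x (u₁ x) - σ₂ k x (u₂ x)) ^ 2) :=
    Summable.of_nonneg_of_le hnn hIbound (hα.mul_right _)
  have hts : (∑' k, ∫ x, κ x ^ 2 * (σ₂ k x (u₁ x) - σ₂ k x (u₂ x)) ^ 2) ≤ A * ∫ x, G x := by
    calc (∑' k, ∫ x, κ x ^ 2 * (σ₂ k x (u₁ x) - σ₂ k x (u₂ x)) ^ 2)
        ≤ ∑' k, α k * ∫ x, G x := Summable.tsum_le_tsum hIbound hsum (hα.mul_right _)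
      _ = A * ∫ x, G x := by rw [tsum_mul_right, hAdef]
  have hIGeq : ∫ x, G x = M ^ 2 * (1 + 2 * K) * (∫ x, (u₁ x - u₂ x) ^ 2) +
      M ^ 2 * δ * ∫ x, (|u₁ x| ^ (p - 2) + |u₂ x| ^ (p - 2)) * (u₁ x - u₂ x) ^ 2 := by
    rw [hGdef]
    rw [integral_const_mul, integral_add (hIvsq.const_mul _) (hIS.const_mul _),
      integral_const_mul, integral_const_mul]
    ring
  have hJ0 : 0 ≤ ∫ x, (|u₁ x| ^ (p - 2) + |u₂ x| ^ (p - 2)) * (u₁ x - u₂ x) ^ 2 :=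
    integral_nonneg hS0
  have hY0 : 0 ≤ ∫ x, (u₁ x - u₂ x) ^ 2 := integral_nonneg fun x => sq_nonneg _
  have hVeq : (eLpNorm (fun x => u₁ x - u₂ x) 2 volume).toReal ^ 2 =
      ∫ x, (u₁ x - u₂ x) ^ 2 := by
    rw [hv2.eLpNorm_eq_integral_rpow_norm (by norm_num) ENNReal.ofNat_ne_top]
    have hXeq : (∫ x, ‖u₁ x - u₂ x‖ ^ ((2:ℝ≥0∞)).toReal) = ∫ x, (u₁ x - u₂ x) ^ 2 := by
      apply integral_congr_ae
      refine Filter.Eventually.of_forall fun x => ?_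
      show ‖u₁ x - u₂ x‖ ^ ((2:ℝ≥0∞)).toReal = (u₁ x - u₂ x) ^ 2
      rw [show ((2:ℝ≥0∞)).toReal = ((2:ℕ):ℝ) by simp, Real.rpow_natCast, Real.norm_eq_abs,
        sq_abs]
    rw [hXeq]
    rw [ENNReal.toReal_ofReal (Real.rpow_nonneg hY0 _)]
    rw [← Real.rpow_natCast ((∫ x, (u₁ x - u₂ x) ^ 2) ^ _) 2, ← Real.rpow_mul hY0]
    norm_num
  refine le_trans hts ?_
  rw [hIGeq, hVeq]
  have t1 : A * M ^ 2 * δ *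
      (∫ x, (|u₁ x| ^ (p - 2) + |u₂ x| ^ (p - 2)) * (u₁ x - u₂ x) ^ 2) ≤
      ε * ∫ x, (|u₁ x| ^ (p - 2) + |u₂ x| ^ (p - 2)) * (u₁ x - u₂ x) ^ 2 :=
    mul_le_mul_of_nonneg_right hδε hJ0
  nlinarith [t1, hY0]
end

section
/- Let K be a real Hilbert space, (E,d) a metric space, and G : K → E a map such that whenever a sequence (v_j) in K is norm-bounded and converges weakly to some v ∈ K, one has G(v_j) → G(v) in E. Define I : E → [0,+∞] by I(φ) = inf { (1/2)‖v‖² : v ∈ K, G(v) = φ }, with the convention inf ∅ = +∞. Then for every s ≥ 0 the sublevel set { φ ∈ E : I(φ) ≤ s } equals G( { v ∈ K : ‖v‖² ≤ 2s } ) and is a compact subset of E; in particular, I is a good rate function on E. -/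
open Filter Topology
open scoped ENNReal RealInnerProductSpace

/-- Weak sequential compactness of bounded sequences in a real Hilbert space. -/
lemma exists_weak_limit {K : Type*} [NormedAddCommGroup K] [InnerProductSpace ℝ K]
    [CompleteSpace K] (v : ℕ → K) (C : ℝ) (hC : ∀ j, ‖v j‖ ≤ C) :
    ∃ (w : K) (ψ : ℕ → ℕ), StrictMono ψ ∧
      ∀ u : K, Tendsto (fun k => ⟪u, v (ψ k)⟫) atTop (𝓝 ⟪u, w⟫) := by
  have hC0 : 0 ≤ C := le_trans (norm_nonneg _) (hC 0)
  -- Bolzano–Weierstrass in the product space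
  set S : Set (ℕ → ℝ) := Set.univ.pi fun _ => Set.Icc (-(C * C)) (C * C) with hS
  have hScomp : IsCompact S := isCompact_univ_pi fun _ => isCompact_Icc
  have hSseq : IsSeqCompact S := hScomp.isSeqCompact
  set F : ℕ → ℕ → ℝ := fun j i => ⟪v i, v j⟫ with hFdef
  have hF : ∀ j, F j ∈ S := by
    intro j
    intro i _
    have h1 : |⟪v i, v j⟫| ≤ ‖v i‖ * ‖v j‖ := abs_real_inner_le_norm _ _
    have h2 : ‖v i‖ * ‖v j‖ ≤ C * C :=
      mul_le_mul (hC i) (hC j) (norm_nonneg _) hC0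
    have := h1.trans h2
    exact abs_le.mp this
  obtain ⟨g, -, ψ, hψ, hg⟩ := hSseq hF
  have hgi : ∀ i, Tendsto (fun k => ⟪v i, v (ψ k)⟫) atTop (𝓝 (g i)) := by
    intro i
    exact (tendsto_pi_nhds.mp hg) i
  -- closure of span
  set M := (Submodule.span ℝ (Set.range v)).topologicalClosure with hM
  haveI : CompleteSpace M :=
    (Submodule.isClosed_topologicalClosure _).completeSpace_coe
  have hvM : ∀ j, v j ∈ M := fun j =>
    Submodule.le_topologicalClosure _ (Submodule.subset_span ⟨j, rfl⟩)
  have hspan : ∀ y ∈ Submodule.span ℝ (Set.range v),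
      ∃ l : ℝ, Tendsto (fun k => ⟪y, v (ψ k)⟫) atTop (𝓝 l) := by
    intro y hy
    induction hy using Submodule.span_induction with
    | mem x hx =>
        obtain ⟨i, rfl⟩ := hx
        exact ⟨g i, hgi i⟩
    | zero => exact ⟨0, by simp⟩
    | add x y hx hy ihx ihy =>
        obtain ⟨lx, hlx⟩ := ihx
        obtain ⟨ly, hly⟩ := ihy
        refine ⟨lx + ly, ?_⟩
        simpa [inner_add_left] using hlx.add hly
    | smul a x hx ihx =>
        obtain ⟨lx, hlx⟩ := ihx
        refine ⟨a * lx, ?_⟩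
        simpa [real_inner_smul_left] using hlx.const_mul a
  have key : ∀ u : K, CauchySeq fun k => ⟪u, v (ψ k)⟫ := by
    intro u
    set p : K := (Submodule.orthogonalProjectionOnto M u : K) with hp
    have hup : ∀ j, ⟪u, v j⟫ = ⟪p, v j⟫ := by
      intro j
      have h0 := Submodule.starProjection_inner_eq_zero (K := M) u (v j) (hvM j)
      rw [Submodule.starProjection_apply, inner_sub_left] at h0
      linarith
    rw [Metric.cauchySeq_iff]
    intro ε hε
    have hpM : p ∈ M := SetLike.coe_mem _
    have hpc : p ∈ closure (Submodule.span ℝ (Set.range v) : Set K) := hpM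
    have hδ : 0 < ε / (4 * (C + 1)) := by positivity
    obtain ⟨y, hy, hyd⟩ := Metric.mem_closure_iff.mp hpc _ hδ
    rw [dist_eq_norm] at hyd
    obtain ⟨l, hl⟩ := hspan y hy
    obtain ⟨N, hN⟩ := Metric.cauchySeq_iff.mp hl.cauchySeq (ε / 2) (by positivity)
    refine ⟨N, fun m hm n hn => ?_⟩
    have hbound : ∀ j, |⟪p - y, v j⟫| ≤ ε / 4 := by
      intro j
      have h1 : |⟪p - y, v j⟫| ≤ ‖p - y‖ * ‖v j‖ := abs_real_inner_le_norm _ _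
      have h2 : ‖p - y‖ * ‖v j‖ ≤ (ε / (4 * (C + 1))) * (C + 1) := by
        apply mul_le_mul hyd.le ((hC j).trans (by linarith)) (norm_nonneg _) hδ.le
      have h3 : (ε / (4 * (C + 1))) * (C + 1) = ε / 4 := by
        field_simp
      linarith [h1.trans h2]
    have hyc := hN m hm n hn
    rw [Real.dist_eq] at hyc ⊢
    have e1 : ⟪u, v (ψ m)⟫ - ⟪u, v (ψ n)⟫ =
        (⟪y, v (ψ m)⟫ - ⟪y, v (ψ n)⟫) + ⟪p - y, v (ψ m)⟫ - ⟪p - y, v (ψ n)⟫ := by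
      rw [hup (ψ m), hup (ψ n)]
      simp [inner_sub_left]
    rw [e1]
    have b1 := hbound (ψ m)
    have b2 := hbound (ψ n)
    have := abs_sub_abs_le_abs_sub (⟪y, v (ψ m)⟫) (⟪y, v (ψ n)⟫)
    calc |⟪y, v (ψ m)⟫ - ⟪y, v (ψ n)⟫ + ⟪p - y, v (ψ m)⟫ - ⟪p - y, v (ψ n)⟫|
        ≤ |⟪y, v (ψ m)⟫ - ⟪y, v (ψ n)⟫ + ⟪p - y, v (ψ m)⟫| + |⟪p - y, v (ψ n)⟫| :=
          abs_sub _ _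
      _ ≤ |⟪y, v (ψ m)⟫ - ⟪y, v (ψ n)⟫| + |⟪p - y, v (ψ m)⟫| + |⟪p - y, v (ψ n)⟫| := by
          have := abs_add_le (⟪y, v (ψ m)⟫ - ⟪y, v (ψ n)⟫) (⟪p - y, v (ψ m)⟫)
          linarith
      _ < ε := by linarith
  have hex : ∀ u : K, ∃ l : ℝ, Tendsto (fun k => ⟪u, v (ψ k)⟫) atTop (𝓝 l) :=
    fun u => cauchySeq_tendsto_of_complete (key u)
  choose f hf using hex
  have hadd : ∀ u u' : K, f (u + u') = f u + f u' := by
    intro u u'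
    refine tendsto_nhds_unique (hf (u + u')) ?_
    simpa [inner_add_left] using (hf u).add (hf u')
  have hsmul : ∀ (c : ℝ) (u : K), f (c • u) = c * f u := by
    intro c u
    refine tendsto_nhds_unique (hf (c • u)) ?_
    simpa [real_inner_smul_left] using (hf u).const_mul c
  have hbnd : ∀ u : K, ‖f u‖ ≤ C * ‖u‖ := by
    intro u
    have h1 : Tendsto (fun k => |⟪u, v (ψ k)⟫|) atTop (𝓝 |f u|) := (hf u).abs
    rw [Real.norm_eq_abs]
    refine le_of_tendsto h1 (Eventually.of_forall fun k => ?_)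
    have := abs_real_inner_le_norm u (v (ψ k))
    have h2 : ‖u‖ * ‖v (ψ k)‖ ≤ ‖u‖ * C :=
      mul_le_mul_of_nonneg_left (hC _) (norm_nonneg _)
    nlinarith [norm_nonneg u]
  let Flin : K →ₗ[ℝ] ℝ :=
    { toFun := f
      map_add' := hadd
      map_smul' := hsmul }
  let Fc : K →L[ℝ] ℝ := LinearMap.mkContinuous Flin C hbnd
  set w : K := (InnerProductSpace.toDual ℝ K).symm Fc with hw
  have hwu : ∀ u : K, f u = ⟪w, u⟫ := by
    intro u
    have h1 : InnerProductSpace.toDual ℝ K w = Fc :=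
      (InnerProductSpace.toDual ℝ K).apply_symm_apply Fc
    have h2 : (InnerProductSpace.toDual ℝ K w) u = ⟪w, u⟫ :=
      InnerProductSpace.toDual_apply_apply
    rw [h1] at h2
    exact h2
  refine ⟨w, ψ, hψ, fun u => ?_⟩
  have := hf u
  rwa [hwu u, real_inner_comm] at this

section Helpers

variable {K : Type*} [NormedAddCommGroup K] [InnerProductSpace ℝ K] [CompleteSpace K]

lemma weak_tendsto_functionals {v : ℕ → K} {ψ : ℕ → ℕ} {w : K}
    (hweak : ∀ u : K, Tendsto (fun k => ⟪u, v (ψ k)⟫) atTop (𝓝 ⟪u, w⟫)) :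
    ∀ g : K →L[ℝ] ℝ, Tendsto (fun k => g (v (ψ k))) atTop (𝓝 (g w)) := by
  intro g
  set u := (InnerProductSpace.toDual ℝ K).symm g with hu
  have hgu : ∀ x : K, g x = ⟪u, x⟫ := by
    intro x
    have h1 : InnerProductSpace.toDual ℝ K u = g :=
      (InnerProductSpace.toDual ℝ K).apply_symm_apply g
    have h2 : (InnerProductSpace.toDual ℝ K u) x = ⟪u, x⟫ :=
      InnerProductSpace.toDual_apply_apply
    rw [h1] at h2
    exact h2
  simp only [hgu]
  exact hweak u

lemma sq_le_two_s {s a : ℝ} (hs : 0 ≤ s) (ha : 0 ≤ a)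
    (h : a ^ 2 ≤ a * Real.sqrt (2 * s)) : a ^ 2 ≤ 2 * s := by
  rcases ha.eq_or_lt with h0 | h0
  · nlinarith
  · have h1 : a ≤ Real.sqrt (2 * s) := by
      have : a * a ≤ a * Real.sqrt (2 * s) := by nlinarith
      exact le_of_mul_le_mul_left this h0
    have h2 : Real.sqrt (2 * s) ^ 2 = 2 * s := Real.sq_sqrt (by linarith)
    nlinarith [Real.sqrt_nonneg (2 * s)]

lemma norm_le_sqrt_of_sq_le {a b : ℝ} (hb : 0 ≤ b) (_ha : 0 ≤ a) (h : a ^ 2 ≤ b) :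
    a ≤ Real.sqrt b := by
  rw [show b = Real.sqrt b ^ 2 from (Real.sq_sqrt hb).symm] at h
  nlinarith [Real.sqrt_nonneg b]

end Helpers

/-- If `G : K → E` maps bounded weakly convergent sequences of the Hilbert space `K`
to convergent sequences of the metric space `E`, and
`I(φ) = inf {(1/2)‖v‖² : G v = φ}` (with `inf ∅ = +∞`), then every sublevel set
`{φ : I(φ) ≤ s}`, `s ≥ 0`, equals `G({v : ‖v‖² ≤ 2s})` and is compact; in particular
`I` is a good rate function on `E`. -/
theorem rate_function_sublevel_eq_image_and_compact
    {K E : Type*} [NormedAddCommGroup K] [InnerProductSpace ℝ K] [CompleteSpace K]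
    [MetricSpace E] (G : K → E)
    (hG : ∀ (vseq : ℕ → K) (v : K), (∃ C : ℝ, ∀ j, ‖vseq j‖ ≤ C) →
      (∀ f : K →L[ℝ] ℝ, Tendsto (fun j => f (vseq j)) atTop (𝓝 (f v))) →
      Tendsto (fun j => G (vseq j)) atTop (𝓝 (G v)))
    (I : E → ℝ≥0∞)
    (hI : ∀ φ, I φ = ⨅ (v : K) (_ : G v = φ), ENNReal.ofReal ((1 / 2) * ‖v‖ ^ 2)) :
    ∀ s : ℝ, 0 ≤ s →
      {φ : E | I φ ≤ ENNReal.ofReal s} = G '' {v : K | ‖v‖ ^ 2 ≤ 2 * s} ∧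
        IsCompact {φ : E | I φ ≤ ENNReal.ofReal s} := by
  intro s hs
  have hset : {φ : E | I φ ≤ ENNReal.ofReal s} = G '' {v : K | ‖v‖ ^ 2 ≤ 2 * s} := by
    ext φ
    simp only [Set.mem_setOf_eq, Set.mem_image]
    constructor
    · intro h
      -- minimizing sequence
      have hseq : ∀ n : ℕ, ∃ v : K, G v = φ ∧ ‖v‖ ^ 2 ≤ 2 * s + 2 / (n + 1) := by
        intro n
        have hlt : I φ < ENNReal.ofReal (s + 1 / (n + 1)) := by
          refine lt_of_le_of_lt h ?_
          rw [ENNReal.ofReal_lt_ofReal_iff (by positivity)]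
          have : (0 : ℝ) < 1 / (n + 1) := by positivity
          linarith
        rw [hI] at hlt
        rw [iInf_lt_iff] at hlt
        obtain ⟨v, hv⟩ := hlt
        rw [iInf_lt_iff] at hv
        obtain ⟨hGv, hv⟩ := hv
        refine ⟨v, hGv, ?_⟩
        rw [ENNReal.ofReal_lt_ofReal_iff (by positivity)] at hv
        have he : 2 / ((n : ℝ) + 1) = 2 * (1 / ((n : ℝ) + 1)) := by ring
        rw [he]; linarith
      choose vs hGs hns using hseq
      have hbd : ∀ n, ‖vs n‖ ≤ Real.sqrt (2 * s + 2) := by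
        intro n
        refine norm_le_sqrt_of_sq_le (by linarith) (norm_nonneg _) ?_
        have h1 : (2 : ℝ) / (n + 1) ≤ 2 := by
          rw [div_le_iff₀ (by positivity)]
          have : (1 : ℝ) ≤ (n : ℝ) + 1 := by
            have := Nat.cast_nonneg (α := ℝ) n; linarith
          linarith
        linarith [hns n]
      obtain ⟨w, ψ, hψ, hweak⟩ := exists_weak_limit vs (Real.sqrt (2 * s + 2)) hbd
      have hGconv : Tendsto (fun k => G (vs (ψ k))) atTop (𝓝 (G w)) :=
        hG (fun k => vs (ψ k)) w ⟨Real.sqrt (2 * s + 2), fun k => hbd (ψ k)⟩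
          (weak_tendsto_functionals hweak)
      have hGw : G w = φ := by
        have hconst : Tendsto (fun k => G (vs (ψ k))) atTop (𝓝 φ) := by
          simp only [hGs]
          exact tendsto_const_nhds
        exact tendsto_nhds_unique hGconv hconst
      -- norm bound on w
      have h1 : Tendsto (fun k => ⟪w, vs (ψ k)⟫) atTop (𝓝 (‖w‖ ^ 2)) := by
        have := hweak w
        rwa [real_inner_self_eq_norm_sq] at this
      have h2 : ∀ k, ⟪w, vs (ψ k)⟫ ≤ ‖w‖ * Real.sqrt (2 * s + 2 / (ψ k + 1)) := by
        intro k
        refine (real_inner_le_norm w _).trans ?_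
        refine mul_le_mul_of_nonneg_left ?_ (norm_nonneg _)
        exact norm_le_sqrt_of_sq_le (by positivity) (norm_nonneg _) (hns (ψ k))
      have h3 : Tendsto (fun k => ‖w‖ * Real.sqrt (2 * s + 2 / (ψ k + 1)))
          atTop (𝓝 (‖w‖ * Real.sqrt (2 * s))) := by
        refine tendsto_const_nhds.mul ?_
        have h4 : Tendsto (fun k : ℕ => 2 * s + 2 / ((ψ k : ℝ) + 1)) atTop (𝓝 (2 * s)) := by
          have h5 : Tendsto (fun n : ℕ => 2 / ((n : ℝ) + 1)) atTop (𝓝 0) := by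
            have := tendsto_one_div_add_atTop_nhds_zero_nat (𝕜 := ℝ)
            have h6 := this.const_mul (2 : ℝ)
            simpa [mul_one_div, div_eq_mul_inv] using h6
          have h7 := h5.comp (hψ.tendsto_atTop)
          have := tendsto_const_nhds (x := 2 * s) (f := atTop (α := ℕ)) |>.add h7
          simpa using this
        exact (Real.continuous_sqrt.tendsto _).comp h4
      have h8 : ‖w‖ ^ 2 ≤ ‖w‖ * Real.sqrt (2 * s) :=
        le_of_tendsto_of_tendsto' h1 h3 h2
      exact ⟨w, sq_le_two_s hs (norm_nonneg _) h8, hGw⟩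
    · rintro ⟨v, hv, rfl⟩
      rw [hI]
      have h1 : (⨅ (v' : K) (_ : G v' = G v), ENNReal.ofReal ((1 / 2) * ‖v'‖ ^ 2))
          ≤ ENNReal.ofReal ((1 / 2) * ‖v‖ ^ 2) := iInf_le_of_le v (iInf_le _ rfl)
      refine le_trans h1 ?_
      refine ENNReal.ofReal_le_ofReal ?_
      linarith [hv]
  refine ⟨hset, ?_⟩
  rw [hset]
  refine IsSeqCompact.isCompact ?_
  intro φs hφs
  choose vs hvs hGs using hφs
  have hbd : ∀ n, ‖vs n‖ ≤ Real.sqrt (2 * s) :=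
    fun n => norm_le_sqrt_of_sq_le (by linarith) (norm_nonneg _) (hvs n)
  obtain ⟨w, ψ, hψ, hweak⟩ := exists_weak_limit vs (Real.sqrt (2 * s)) hbd
  have hGconv : Tendsto (fun k => G (vs (ψ k))) atTop (𝓝 (G w)) :=
    hG (fun k => vs (ψ k)) w ⟨Real.sqrt (2 * s), fun k => hbd (ψ k)⟩
      (weak_tendsto_functionals hweak)
  have h1 : Tendsto (fun k => ⟪w, vs (ψ k)⟫) atTop (𝓝 (‖w‖ ^ 2)) := by
    have := hweak w
    rwa [real_inner_self_eq_norm_sq] at this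
  have h8 : ‖w‖ ^ 2 ≤ ‖w‖ * Real.sqrt (2 * s) := by
    refine le_of_tendsto h1 (Eventually.of_forall fun k => ?_)
    refine (real_inner_le_norm w _).trans ?_
    exact mul_le_mul_of_nonneg_left (hbd (ψ k)) (norm_nonneg _)
  have hwmem : w ∈ {v : K | ‖v‖ ^ 2 ≤ 2 * s} := sq_le_two_s hs (norm_nonneg _) h8
  refine ⟨G w, ⟨w, hwmem, rfl⟩, ψ, hψ, ?_⟩
  have : (φs ∘ ψ) = fun k => G (vs (ψ k)) := by
    funext k
    exact (hGs (ψ k)).symm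
  rw [this]
  exact hGconv
end
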